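/- arXiv:1307.7410 — 2 statements merged into one kernel-verified Lean document; each statement's English description precedes it below -/
import Mathlib

section
/- Each of the four elements I − BK⁻¹, I − KB⁻¹, I − K⁻¹B, I − B⁻¹K of End(V) sends U_i into U_0 + U_1 + ⋯ + U_{i−1} for 0 ≤ i ≤ d (interpreting the empty sum as 0 when i = 0), and each of these four elements is nilpotent. -/
noncomputable section

open Module Submodule Polynomial

/-- The q-Racah eigenvalue `θ_i = a q^{d-2i} + a⁻¹ q^{2i-d}`. -/
def qRacahTheta {𝕂 : Type*} [Field 𝕂] (d : ℕ) (q a : 𝕂) (i : ℕ) : 𝕂 :=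
  a * q ^ ((d : ℤ) - 2 * (i : ℤ)) + a⁻¹ * q ^ (2 * (i : ℤ) - (d : ℤ))

/-- The polynomial `τ_{ij} = (x-θ_i)(x-θ_{i+1})⋯(x-θ_{j-1})`. -/
def qRacahTau {𝕂 : Type*} [Field 𝕂] (d : ℕ) (q a : 𝕂) (i j : ℕ) : Polynomial 𝕂 :=
  ∏ k ∈ Finset.Ico i j, (Polynomial.X - Polynomial.C (qRacahTheta d q a k))

/-- A tridiagonal pair of q-Racah type, with diameter `d ≥ 1`, on a finite-dimensional
vector space `V` over an algebraically closed field `𝕂`.  The eigenspaces of `A`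
(resp. `A*`) are `Veig i` (resp. `Vstar i`) for `0 ≤ i ≤ d`, in a standard ordering,
with eigenvalues `θ_i = a q^{d-2i} + a⁻¹ q^{2i-d}` (resp. `θ*_i = b q^{d-2i} + b⁻¹ q^{2i-d}`). -/
structure QRacahTDPair (𝕂 V : Type*) [Field 𝕂] [IsAlgClosed 𝕂]
    [AddCommGroup V] [Module 𝕂 V] [FiniteDimensional 𝕂 V] [Nontrivial V] where
  A : Module.End 𝕂 V
  Astar : Module.End 𝕂 V
  d : ℕ
  hd : 1 ≤ d
  q : 𝕂
  a : 𝕂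
  b : 𝕂
  hq : q ≠ 0
  ha : a ≠ 0
  hb : b ≠ 0
  hq4 : q ^ 4 ≠ 1
  Veig : ℕ → Submodule 𝕂 V
  Vstar : ℕ → Submodule 𝕂 V
  hVeig : ∀ i ≤ d, Veig i = Module.End.eigenspace A (qRacahTheta d q a i)
  hVeig_ne : ∀ i ≤ d, Veig i ≠ ⊥
  hVeig_zero : ∀ i, d < i → Veig i = ⊥
  hVeig_all : ∀ μ : 𝕂, Module.End.eigenspace A μ ≠ ⊥ → ∃ i ≤ d, μ = qRacahTheta d q a i
  hVstar : ∀ i ≤ d, Vstar i = Module.End.eigenspace Astar (qRacahTheta d q b i)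
  hVstar_ne : ∀ i ≤ d, Vstar i ≠ ⊥
  hVstar_zero : ∀ i, d < i → Vstar i = ⊥
  hVstar_all : ∀ μ : 𝕂, Module.End.eigenspace Astar μ ≠ ⊥ → ∃ i ≤ d, μ = qRacahTheta d q b i
  hdiag : (⨆ i ∈ Finset.range (d + 1), Veig i) = ⊤
  hdiagStar : (⨆ i ∈ Finset.range (d + 1), Vstar i) = ⊤
  hTri : ∀ i ≤ d, (Veig i).map Astar ≤ Veig (i - 1) ⊔ Veig i ⊔ Veig (i + 1)
  hTriStar : ∀ i ≤ d, (Vstar i).map A ≤ Vstar (i - 1) ⊔ Vstar i ⊔ Vstar (i + 1)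
  hIrred : ∀ W : Submodule 𝕂 V, W.map A ≤ W → W.map Astar ≤ W → W = ⊥ ∨ W = ⊤

namespace QRacahTDPair

variable {𝕂 V : Type*} [Field 𝕂] [IsAlgClosed 𝕂]
  [AddCommGroup V] [Module 𝕂 V] [FiniteDimensional 𝕂 V] [Nontrivial V]

/-- `U_i = (V*_0 + ⋯ + V*_i) ∩ (V_i + ⋯ + V_d)`, the first split decomposition. -/
def U (S : QRacahTDPair 𝕂 V) (i : ℕ) : Submodule 𝕂 V :=
  (⨆ j ∈ Finset.range (i + 1), S.Vstar j) ⊓ (⨆ j ∈ Finset.Icc i S.d, S.Veig j)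

/-- `U_i^⇓ = (V*_0 + ⋯ + V*_i) ∩ (V_0 + ⋯ + V_{d-i})`, the second split decomposition. -/
def Udown (S : QRacahTDPair 𝕂 V) (i : ℕ) : Submodule 𝕂 V :=
  (⨆ j ∈ Finset.range (i + 1), S.Vstar j) ⊓ (⨆ j ∈ Finset.range (S.d - i + 1), S.Veig j)

/-- `K_i = U_i ∩ U_i^⇓`. -/
def Ksub (S : QRacahTDPair 𝕂 V) (i : ℕ) : Submodule 𝕂 V := S.U i ⊓ S.Udown i

/-- `U_{i-1}`, with the convention `U_{-1} = 0`. -/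
def Uprev (S : QRacahTDPair 𝕂 V) : ℕ → Submodule 𝕂 V
  | 0 => ⊥
  | i + 1 => S.U i

/-- The operator `τ_{ij}(A) = (A-θ_i)(A-θ_{i+1})⋯(A-θ_{j-1})`. -/
def tauA (S : QRacahTDPair 𝕂 V) (i j : ℕ) : Module.End 𝕂 V :=
  Polynomial.aeval S.A (qRacahTau S.d S.q S.a i j)

end QRacahTDPair

/-- A tridiagonal pair of q-Racah type together with the operators `K`, `B` (with their
inverses `K⁻¹ = Kinv`, `B⁻¹ = Binv`) and the double lowering operator `ψ`, which is the
unique endomorphism with `ψR - Rψ = (q - q⁻¹)(K - K⁻¹)` (where `R = A - aK - a⁻¹K⁻¹`)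
and `ψ K_i = 0` for `0 ≤ i ≤ d/2`. -/
structure QRacahOps (𝕂 V : Type*) [Field 𝕂] [IsAlgClosed 𝕂]
    [AddCommGroup V] [Module 𝕂 V] [FiniteDimensional 𝕂 V] [Nontrivial V]
    extends QRacahTDPair 𝕂 V where
  K : Module.End 𝕂 V
  Kinv : Module.End 𝕂 V
  B : Module.End 𝕂 V
  Binv : Module.End 𝕂 V
  hKKinv : K * Kinv = 1
  hKinvK : Kinv * K = 1
  hBBinv : B * Binv = 1
  hBinvB : Binv * B = 1
  hK : ∀ i ≤ d, ∀ v ∈ toQRacahTDPair.U i, K v = (q ^ ((d : ℤ) - 2 * (i : ℤ))) • v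
  hB : ∀ i ≤ d, ∀ v ∈ toQRacahTDPair.Udown i, B v = (q ^ ((d : ℤ) - 2 * (i : ℤ))) • v
  ψ : Module.End 𝕂 V
  hψR : ψ * (A - a • K - a⁻¹ • Kinv) - (A - a • K - a⁻¹ • Kinv) * ψ
      = (q - q⁻¹) • (K - Kinv)
  hψKer : ∀ i, 2 * i ≤ d → toQRacahTDPair.Ksub i ≤ LinearMap.ker ψ

namespace QRacahOps

variable {𝕂 V : Type*} [Field 𝕂] [IsAlgClosed 𝕂]
  [AddCommGroup V] [Module 𝕂 V] [FiniteDimensional 𝕂 V] [Nontrivial V]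

/-- The raising map `R = A - aK - a⁻¹K⁻¹`. -/
def R (S : QRacahOps 𝕂 V) : Module.End 𝕂 V := S.A - S.a • S.K - S.a⁻¹ • S.Kinv

/-- The raising map `R^⇓ = A - a⁻¹B - aB⁻¹`. -/
def Rdown (S : QRacahOps 𝕂 V) : Module.End 𝕂 V := S.A - S.a⁻¹ • S.B - S.a • S.Binv

/-- `MK_i`: the submodule of `V` generated by `K_i` under the subalgebra `M` of
`End(V)` generated by `A`. -/
def MK (S : QRacahOps 𝕂 V) (i : ℕ) : Submodule 𝕂 V :=
  Submodule.span 𝕂 {w : V | ∃ m ∈ Algebra.adjoin 𝕂 ({S.A} : Set (Module.End 𝕂 V)),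
    ∃ v ∈ S.Ksub i, w = m v}

end QRacahOps

/-!
Write `F n = V*_0 + ⋯ + V*_{n-1}`. Up to scalars, `A` raises and `A*` lowers both families
`U_i = F (i+1) ∩ (V_i + ⋯ + V_d)` and `U_i^⇓ = F (i+1) ∩ (V_0 + ⋯ + V_{d-i})`, so by irreducibility
each family spans `V`. Adjacent pieces meet trivially because `K` (resp. `B`) acts on them by
`q^{d-2i} ≠ q^{d-2i-2}`, and the modular law then gives `F (i+1) = U_0 + ⋯ + U_i = U_0^⇓ + ⋯ + U_i^⇓`.
Hence `K`, `K⁻¹`, `B`, `B⁻¹` all preserve the flag `F` and act on `F (n+1) / F n` by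
`q^{±(d-2n)}`, so each of the four products acts as the identity there: `I` minus it lowers the flag,
which gives both claims.
-/

namespace Submodule

variable {R M : Type*} [CommRing R] [AddCommGroup M] [Module R M]

theorem map_biSup_le_iff {ι : Type*} (f : Module.End R M) (s : Finset ι)
    (p : ι → Submodule R M) (Q : Submodule R M) :
    (⨆ j ∈ s, p j).map f ≤ Q ↔ ∀ j ∈ s, (p j).map f ≤ Q := by
  simp only [Submodule.map_iSup, iSup_le_iff]

theorem map_sub_smul_le_iff {P Q : Submodule R M} (hPQ : P ≤ Q) (f : Module.End R M) (c : R) :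
    P.map (f - c • 1) ≤ Q ↔ P.map f ≤ Q := by
  simp only [Submodule.map_le_iff_le_comap]
  refine ⟨fun h v hv => ?_, fun h v hv => ?_⟩
  · simpa using Q.add_mem (h hv) (Q.smul_mem c (hPQ hv))
  · simpa using Q.sub_mem (h hv) (Q.smul_mem c (hPQ hv))

theorem map_le_of_le_eigenspace {P : Submodule R M} {f : Module.End R M} {c : R}
    (hP : P ≤ f.eigenspace c) : P.map f ≤ P := by
  rintro _ ⟨v, hv, rfl⟩
  rw [Module.End.mem_eigenspace_iff.1 (hP hv)]
  exact P.smul_mem c hv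

theorem map_biSup_sub_smul_le {ι : Type*} {f : Module.End R M} {p : ι → Submodule R M}
    {e : ι → R} {s t : Finset ι} {c : R} (hp : ∀ j ∈ s, p j ≤ f.eigenspace (e j))
    (hst : ∀ j ∈ s, j ∉ t → e j = c) :
    (⨆ j ∈ s, p j).map (f - c • 1) ≤ ⨆ j ∈ t, p j := by
  refine (map_biSup_le_iff _ _ _ _).2 fun j hj => ?_
  rintro _ ⟨v, hv, rfl⟩
  have hfv : (f - c • 1) v = (e j - c) • v := by
    simp [Module.End.mem_eigenspace_iff.1 (hp j hj hv), sub_smul]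
  rw [hfv]
  by_cases hjt : j ∈ t
  · exact smul_mem _ _ (le_biSup p hjt hv)
  · simp [hst j hj hjt]

theorem map_biSup_le_of_tridiagonal {f : Module.End R M} {p : ℕ → Submodule R M}
    {s t : Finset ℕ} (hp : ∀ j ∈ s, (p j).map f ≤ p (j - 1) ⊔ p j ⊔ p (j + 1))
    (hst : ∀ j ∈ s, j - 1 ∈ t ∧ j ∈ t ∧ (j + 1 ∈ t ∨ p (j + 1) = ⊥)) :
    (⨆ j ∈ s, p j).map f ≤ ⨆ j ∈ t, p j := by
  refine (map_biSup_le_iff _ _ _ _).2 fun j hj => (hp j hj).trans ?_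
  obtain ⟨hprev, hself, hnext⟩ := hst j hj
  refine sup_le (sup_le (le_biSup p hprev) (le_biSup p hself)) ?_
  rcases hnext with hnext | hnext
  · exact le_biSup p hnext
  · simp [hnext]

theorem biSup_eq_top_of_irreducible {f g : Module.End R M}
    (hirr : ∀ W : Submodule R M, W.map f ≤ W → W.map g ≤ W → W = ⊥ ∨ W = ⊤)
    {W : ℕ → Submodule R M} {d : ℕ} {α β : ℕ → R}
    (hf : ∀ i ≤ d, (W i).map (f - α i • 1) ≤ W (i + 1))
    (hg : ∀ i ≤ d, (W i).map (g - β i • 1) ≤ W (i - 1))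
    (hW0 : W 0 ≠ ⊥) (hWd : W (d + 1) = ⊥) :
    ⨆ i ∈ Finset.range (d + 1), W i = ⊤ := by
  set T := ⨆ i ∈ Finset.range (d + 1), W i
  have hle : ∀ i ≤ d, W i ≤ T := fun i hi => le_biSup W (Finset.mem_range.2 (by omega))
  have hnext : ∀ i ≤ d, W (i + 1) ≤ T := fun i hi => by
    rcases hi.lt_or_eq with hi | rfl
    · exact hle (i + 1) hi
    · simp [hWd]
  have hinv : ∀ h : Module.End R M, (∀ i ≤ d, ∃ γ : R, (W i).map (h - γ • 1) ≤ T) →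
      T.map h ≤ T := fun h hh => by
    refine (map_biSup_le_iff _ _ _ _).2 fun i hi => ?_
    have hi : i ≤ d := Nat.lt_succ_iff.1 (Finset.mem_range.1 hi)
    obtain ⟨γ, hγ⟩ := hh i hi
    exact (map_sub_smul_le_iff (hle i hi) h γ).1 hγ
  rcases hirr T (hinv f fun i hi => ⟨α i, (hf i hi).trans (hnext i hi)⟩)
    (hinv g fun i hi => ⟨β i, (hg i hi).trans (hle (i - 1) (by omega))⟩) with hT | hT
  · exact absurd (le_bot_iff.1 (hT ▸ hle 0 (Nat.zero_le d))) hW0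
  · exact hT

theorem eq_biSup_of_inf_eq_bot {F G W : ℕ → Submodule R M} {N n : ℕ} (hF : Monotone F)
    (hG : Antitone G) (hWF : ∀ j, W j ≤ F (j + 1)) (hWG : ∀ j, W j ≤ G j)
    (htop : ⨆ j ∈ Finset.range N, W j = ⊤) (hn : n ≤ N) (hdisj : F n ⊓ G n = ⊥) :
    F n = ⨆ j ∈ Finset.range n, W j := by
  set L := ⨆ j ∈ Finset.range n, W j
  set H := ⨆ j ∈ Finset.Ico n N, W j
  have hL : L ≤ F n := iSup₂_le fun j hj =>
    (hWF j).trans (hF (Nat.succ_le_of_lt (Finset.mem_range.1 hj)))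
  have hH : H ≤ G n := iSup₂_le fun j hj => (hWG j).trans (hG (Finset.mem_Ico.1 hj).1)
  have hLH : L ⊔ H = ⊤ := by
    rw [← htop, Finset.range_eq_Ico, ← Finset.Ico_union_Ico_eq_Ico (Nat.zero_le n) hn,
      Finset.iSup_union, ← Finset.range_eq_Ico]
  refine le_antisymm ?_ hL
  calc F n = (L ⊔ H) ⊓ F n := by rw [hLH, top_inf_eq]
    _ = L ⊔ H ⊓ F n := sup_inf_assoc_of_le H hL
    _ ≤ L ⊔ G n ⊓ F n := sup_le_sup_left (inf_le_inf_right _ hH) L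
    _ = L := by rw [inf_comm, hdisj, sup_bot_eq]

end Submodule

namespace Module.End

section Graded

variable {R M : Type*} [CommRing R] [AddCommGroup M] [Module R M]

def ActsByScalarsOnGraded (F : ℕ → Submodule R M) (N : ℕ) (f : End R M) (c : ℕ → R) : Prop :=
  (∀ n ≤ N, (F n).map f ≤ F n) ∧ ∀ n < N, (F (n + 1)).map (f - c n • 1) ≤ F n

variable {F : ℕ → Submodule R M} {N : ℕ} {f g : End R M} {a b : ℕ → R}

theorem ActsByScalarsOnGraded.of_le_eigenspace {P : ℕ → Submodule R M}
    (hF : ∀ n ≤ N, F n = ⨆ j ∈ Finset.range n, P j) (hP : ∀ j < N, P j ≤ f.eigenspace (a j)) :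
    ActsByScalarsOnGraded F N f a := by
  refine ⟨fun n hn => ?_, fun n hn => ?_⟩
  · rw [hF n hn, Submodule.map_biSup_le_iff]
    intro j hj
    have hj : j < n := Finset.mem_range.1 hj
    exact (Submodule.map_le_of_le_eigenspace (hP j (by omega))).trans
      (le_biSup P (Finset.mem_range.2 hj))
  · rw [hF (n + 1) hn, hF n hn.le]
    refine Submodule.map_biSup_sub_smul_le (fun j hj => hP j ?_) fun j hj hjn => ?_
    · have := Finset.mem_range.1 hj; omega
    · rw [Finset.mem_range] at hj hjn
      rw [show j = n by omega]

theorem ActsByScalarsOnGraded.mul (hf : ActsByScalarsOnGraded F N f a)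
    (hg : ActsByScalarsOnGraded F N g b) :
    ActsByScalarsOnGraded F N (g * f) (fun n => b n * a n) := by
  refine ⟨fun n hn => ?_, fun n hn => ?_⟩
  · rw [mul_eq_comp, Submodule.map_comp]
    exact (Submodule.map_mono (hf.1 n hn)).trans (hg.1 n hn)
  · rintro _ ⟨v, hv, rfl⟩
    have hsplit : (g * f - (b n * a n) • 1) v = g ((f - a n • 1) v) + a n • (g - b n • 1) v := by
      simp only [LinearMap.sub_apply, LinearMap.smul_apply, mul_apply, one_apply, map_sub,
        map_smul, smul_sub, smul_smul, mul_comm (a n)]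
      abel
    rw [hsplit]
    exact add_mem (hg.1 n hn.le ⟨_, hf.2 n hn ⟨v, hv, rfl⟩, rfl⟩)
      (Submodule.smul_mem _ _ (hg.2 n hn ⟨v, hv, rfl⟩))

theorem ActsByScalarsOnGraded.map_one_sub_le (hf : ActsByScalarsOnGraded F N f a)
    (ha : ∀ n < N, a n = 1) {n : ℕ} (hn : n < N) : (F (n + 1)).map (1 - f) ≤ F n := by
  have := hf.2 n hn
  rwa [ha n hn, one_smul, ← Submodule.map_neg, neg_sub] at this

theorem pow_eq_zero_of_map_succ_le {T : End R M} (hT : ∀ n < N, (F (n + 1)).map T ≤ F n)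
    (h0 : F 0 = ⊥) (hN : F N = ⊤) : T ^ N = 0 := by
  have hkill : ∀ n ≤ N, (F n).map (T ^ n) = ⊥ := by
    intro n hn
    induction n with
    | zero => simp [h0]
    | succ n ih =>
      rw [pow_succ, mul_eq_comp, Submodule.map_comp, eq_bot_iff, ← ih (by omega)]
      exact Submodule.map_mono (hT n hn)
  have := hkill N le_rfl
  rwa [hN, Submodule.map_top, LinearMap.range_eq_bot] at this

end Graded

theorem eigenspace_le_eigenspace_inv {K M : Type*} [Field K] [AddCommGroup M] [Module K M]
    {f g : End K M} (hgf : g * f = 1) (c : K) : f.eigenspace c ≤ g.eigenspace c⁻¹ := by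
  intro v hv
  rw [mem_eigenspace_iff] at hv ⊢
  have hv' : v = c • g v := by
    rw [← map_smul, ← hv, ← mul_apply, hgf, one_apply]
  rcases eq_or_ne c 0 with rfl | hc
  · rw [zero_smul] at hv'
    simp [hv']
  · rw [hv', smul_smul, inv_mul_cancel₀ hc, one_smul, ← hv']

end Module.End

namespace QRacahTDPair

variable {𝕂 V : Type*} [Field 𝕂] [IsAlgClosed 𝕂]
  [AddCommGroup V] [Module 𝕂 V] [FiniteDimensional 𝕂 V] [Nontrivial V]
  (S : QRacahTDPair 𝕂 V)

def starFlag (n : ℕ) : Submodule 𝕂 V := ⨆ j ∈ Finset.range n, S.Vstar j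

def Vtail (i : ℕ) : Submodule 𝕂 V := ⨆ j ∈ Finset.Icc i S.d, S.Veig j

/-- `V_0 + ⋯ + V_{d-i}`; unlike the truncated `S.d - i + 1` in `Udown`, this is `0` for `i > d`. -/
def Vhead (i : ℕ) : Submodule 𝕂 V := ⨆ j ∈ Finset.range (S.d + 1 - i), S.Veig j

def qPow (i : ℕ) : 𝕂 := S.q ^ ((S.d : ℤ) - 2 * (i : ℤ))

theorem Udown_eq {i : ℕ} (hi : i ≤ S.d) : S.Udown i = S.starFlag (i + 1) ⊓ S.Vhead i := by
  rw [Udown, Vhead, Nat.sub_add_comm hi]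
  rfl

theorem starFlag_mono : Monotone S.starFlag := fun _ _ h =>
  biSup_mono fun _ hj => Finset.range_mono h hj

theorem Vtail_anti : Antitone S.Vtail := fun _ _ h =>
  biSup_mono fun _ hj => Finset.Icc_subset_Icc_left h hj

theorem Vhead_anti : Antitone S.Vhead := fun _ _ h =>
  biSup_mono fun _ hj => Finset.range_mono (by omega) hj

theorem starFlag_zero : S.starFlag 0 = ⊥ := by simp [starFlag]

theorem starFlag_one : S.starFlag 1 = S.Vstar 0 := by simp [starFlag]

theorem starFlag_eq_top : S.starFlag (S.d + 1) = ⊤ := S.hdiagStar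

theorem Vtail_zero : S.Vtail 0 = ⊤ := by
  rw [Vtail, ← Nat.range_succ_eq_Icc_zero]
  exact S.hdiag

theorem Vtail_eq_bot : S.Vtail (S.d + 1) = ⊥ := by simp [Vtail]

theorem Vhead_zero : S.Vhead 0 = ⊤ := S.hdiag

theorem Vhead_eq_bot : S.Vhead (S.d + 1) = ⊥ := by simp [Vhead]

theorem Veig_le_eigenspace {j : ℕ} (hj : j ≤ S.d) :
    S.Veig j ≤ S.A.eigenspace (qRacahTheta S.d S.q S.a j) :=
  (S.hVeig j hj).le

theorem Vstar_le_eigenspace {j : ℕ} (hj : j ≤ S.d) :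
    S.Vstar j ≤ S.Astar.eigenspace (qRacahTheta S.d S.q S.b j) :=
  (S.hVstar j hj).le

theorem map_Veig_le (j : ℕ) :
    (S.Veig j).map S.Astar ≤ S.Veig (j - 1) ⊔ S.Veig j ⊔ S.Veig (j + 1) := by
  by_cases hj : j ≤ S.d
  · exact S.hTri j hj
  · simp [S.hVeig_zero j (by omega)]

theorem map_Vstar_le (j : ℕ) :
    (S.Vstar j).map S.A ≤ S.Vstar (j - 1) ⊔ S.Vstar j ⊔ S.Vstar (j + 1) := by
  by_cases hj : j ≤ S.d
  · exact S.hTriStar j hj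
  · simp [S.hVstar_zero j (by omega)]

theorem starFlag_map_A (n : ℕ) : (S.starFlag n).map S.A ≤ S.starFlag (n + 1) :=
  map_biSup_le_of_tridiagonal (fun j _ => S.map_Vstar_le j) fun j hj => by
    simp only [Finset.mem_range] at hj ⊢
    omega

theorem starFlag_map_Astar_sub {i : ℕ} (hi : i ≤ S.d) :
    (S.starFlag (i + 1)).map (S.Astar - qRacahTheta S.d S.q S.b i • 1) ≤ S.starFlag i :=
  map_biSup_sub_smul_le
    (fun j hj => S.Vstar_le_eigenspace (by simp only [Finset.mem_range] at hj; omega))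
    fun j hj hji => by
      simp only [Finset.mem_range] at hj hji
      rw [show j = i by omega]

theorem Vtail_map_A_sub (i : ℕ) :
    (S.Vtail i).map (S.A - qRacahTheta S.d S.q S.a i • 1) ≤ S.Vtail (i + 1) :=
  map_biSup_sub_smul_le
    (fun j hj => S.Veig_le_eigenspace (Finset.mem_Icc.1 hj).2)
    fun j hj hji => by
      simp only [Finset.mem_Icc] at hj hji
      rw [show j = i by omega]

theorem Vtail_map_Astar (i : ℕ) : (S.Vtail i).map S.Astar ≤ S.Vtail (i - 1) :=
  map_biSup_le_of_tridiagonal (fun j _ => S.map_Veig_le j) fun j hj => by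
    simp only [Finset.mem_Icc] at hj ⊢
    refine ⟨by omega, by omega, ?_⟩
    rcases hj.2.lt_or_eq with hjd | rfl
    · exact Or.inl (by omega)
    · exact Or.inr (S.hVeig_zero _ (by omega))

theorem Vhead_map_A_sub (i : ℕ) :
    (S.Vhead i).map (S.A - qRacahTheta S.d S.q S.a (S.d - i) • 1) ≤ S.Vhead (i + 1) :=
  map_biSup_sub_smul_le
    (fun j hj => S.Veig_le_eigenspace (by simp only [Finset.mem_range] at hj; omega))
    fun j hj hji => by
      simp only [Finset.mem_range] at hj hji
      rw [show j = S.d - i by omega]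

theorem Vhead_map_Astar (i : ℕ) : (S.Vhead i).map S.Astar ≤ S.Vhead (i - 1) :=
  map_biSup_le_of_tridiagonal (fun j _ => S.map_Veig_le j) fun j hj => by
    simp only [Finset.mem_range] at hj ⊢
    refine ⟨by omega, by omega, ?_⟩
    by_cases hjd : j < S.d
    · exact Or.inl (by omega)
    · exact Or.inr (S.hVeig_zero _ (by omega))

theorem qPow_ne_zero (i : ℕ) : S.qPow i ≠ 0 := zpow_ne_zero _ S.hq

theorem qPow_succ_ne (i : ℕ) : S.qPow (i + 1) ≠ S.qPow i := by
  intro h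
  have hq2 : S.q ^ 2 = 1 := by
    have : S.qPow i = S.qPow (i + 1) * S.q ^ 2 := by
      rw [qPow, qPow, ← zpow_natCast, ← zpow_add₀ S.hq]
      congr 1
      push_cast
      ring
    rw [h] at this
    exact (mul_eq_left₀ (S.qPow_ne_zero i)).1 this.symm
  exact S.hq4 (by rw [show 4 = 2 * 2 by rfl, pow_mul, hq2, one_pow])

section Split

variable {G : ℕ → Submodule 𝕂 V}

theorem biSup_starFlag_inf_eq_top {α : ℕ → 𝕂} (hG : Antitone G) (hG0 : G 0 = ⊤)
    (hGd : G (S.d + 1) = ⊥) (hGA : ∀ i, (G i).map (S.A - α i • 1) ≤ G (i + 1))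
    (hGAstar : ∀ i, (G i).map S.Astar ≤ G (i - 1)) :
    ⨆ j ∈ Finset.range (S.d + 1), S.starFlag (j + 1) ⊓ G j = ⊤ := by
  refine biSup_eq_top_of_irreducible S.hIrred (α := α) (β := qRacahTheta S.d S.q S.b)
    (fun i _ => ?_) (fun i hi => ?_) ?_ (by simp [hGd])
  · refine (map_inf_le _).trans (inf_le_inf ?_ (hGA i))
    exact (map_sub_smul_le_iff (S.starFlag_mono (Nat.le_succ _)) _ _).2 (S.starFlag_map_A _)
  · refine (map_inf_le _).trans (inf_le_inf ?_ ?_)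
    · exact (S.starFlag_map_Astar_sub hi).trans (S.starFlag_mono (by omega))
    · exact (map_sub_smul_le_iff (hG (Nat.sub_le i 1)) _ _).2 (hGAstar i)
  · rw [hG0, inf_top_eq, starFlag_one]
    exact S.hVstar_ne 0 (Nat.zero_le _)

theorem starFlag_inf_eq_bot {X : Module.End 𝕂 V} (hG : Antitone G) (hGd : G (S.d + 1) = ⊥)
    (hX : ∀ i ≤ S.d, S.starFlag (i + 1) ⊓ G i ≤ X.eigenspace (S.qPow i))
    {n : ℕ} (hn : n ≤ S.d + 1) : S.starFlag n ⊓ G n = ⊥ := by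
  rcases n with _ | m
  · rw [starFlag_zero, bot_inf_eq]
  rcases hn.lt_or_eq with hm | hm
  · rw [eq_bot_iff, ← (X.eigenspaces_iSupIndep.pairwiseDisjoint (S.qPow_succ_ne m)).eq_bot]
    exact le_inf
      ((le_inf (inf_le_left.trans (S.starFlag_mono (Nat.le_succ _))) inf_le_right).trans
        (hX (m + 1) (by omega)))
      ((le_inf inf_le_left (inf_le_right.trans (hG (Nat.le_succ m)))).trans (hX m (by omega)))
  · rw [hm, hGd, inf_bot_eq]

theorem starFlag_eq_biSup_inf {α : ℕ → 𝕂} {X : Module.End 𝕂 V} (hG : Antitone G)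
    (hG0 : G 0 = ⊤) (hGd : G (S.d + 1) = ⊥) (hGA : ∀ i, (G i).map (S.A - α i • 1) ≤ G (i + 1))
    (hGAstar : ∀ i, (G i).map S.Astar ≤ G (i - 1))
    (hX : ∀ i ≤ S.d, S.starFlag (i + 1) ⊓ G i ≤ X.eigenspace (S.qPow i))
    {n : ℕ} (hn : n ≤ S.d + 1) :
    S.starFlag n = ⨆ j ∈ Finset.range n, S.starFlag (j + 1) ⊓ G j :=
  eq_biSup_of_inf_eq_bot S.starFlag_mono hG (fun _ => inf_le_left) (fun _ => inf_le_right)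
    (S.biSup_starFlag_inf_eq_top hG hG0 hGd hGA hGAstar) hn
    (S.starFlag_inf_eq_bot hG hGd hX hn)

end Split

end QRacahTDPair

namespace QRacahOps

open Module.End

variable {𝕂 V : Type*} [Field 𝕂] [IsAlgClosed 𝕂]
  [AddCommGroup V] [Module 𝕂 V] [FiniteDimensional 𝕂 V] [Nontrivial V]
  (S : QRacahOps 𝕂 V)

theorem U_le_eigenspace_K {i : ℕ} (hi : i ≤ S.d) : S.U i ≤ S.K.eigenspace (S.qPow i) :=
  fun v hv => mem_eigenspace_iff.2 (S.hK i hi v hv)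

theorem Udown_le_eigenspace_B {i : ℕ} (hi : i ≤ S.d) :
    S.Udown i ≤ S.B.eigenspace (S.qPow i) :=
  fun v hv => mem_eigenspace_iff.2 (S.hB i hi v hv)

theorem starFlag_eq_biSup_U {n : ℕ} (hn : n ≤ S.d + 1) :
    S.starFlag n = ⨆ j ∈ Finset.range n, S.U j :=
  S.starFlag_eq_biSup_inf S.Vtail_anti S.Vtail_zero S.Vtail_eq_bot S.Vtail_map_A_sub
    S.Vtail_map_Astar (fun _ hi => S.U_le_eigenspace_K hi) hn

theorem starFlag_eq_biSup_Udown {n : ℕ} (hn : n ≤ S.d + 1) :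
    S.starFlag n = ⨆ j ∈ Finset.range n, S.Udown j := by
  rw [S.starFlag_eq_biSup_inf S.Vhead_anti S.Vhead_zero S.Vhead_eq_bot S.Vhead_map_A_sub
    S.Vhead_map_Astar (fun _ hi => (S.Udown_eq hi).symm.le.trans (S.Udown_le_eigenspace_B hi)) hn]
  refine biSup_congr fun j hj => (S.Udown_eq ?_).symm
  have := Finset.mem_range.1 hj
  omega

theorem actsByScalarsOnGraded_K : ActsByScalarsOnGraded S.starFlag (S.d + 1) S.K S.qPow :=
  .of_le_eigenspace (fun _ hn => S.starFlag_eq_biSup_U hn)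
    fun _ hj => S.U_le_eigenspace_K (Nat.lt_succ_iff.1 hj)

theorem actsByScalarsOnGraded_Kinv :
    ActsByScalarsOnGraded S.starFlag (S.d + 1) S.Kinv fun i => (S.qPow i)⁻¹ :=
  .of_le_eigenspace (fun _ hn => S.starFlag_eq_biSup_U hn) fun _ hj =>
    (S.U_le_eigenspace_K (Nat.lt_succ_iff.1 hj)).trans (eigenspace_le_eigenspace_inv S.hKinvK _)

theorem actsByScalarsOnGraded_B : ActsByScalarsOnGraded S.starFlag (S.d + 1) S.B S.qPow :=
  .of_le_eigenspace (fun _ hn => S.starFlag_eq_biSup_Udown hn)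
    fun _ hj => S.Udown_le_eigenspace_B (Nat.lt_succ_iff.1 hj)

theorem actsByScalarsOnGraded_Binv :
    ActsByScalarsOnGraded S.starFlag (S.d + 1) S.Binv fun i => (S.qPow i)⁻¹ :=
  .of_le_eigenspace (fun _ hn => S.starFlag_eq_biSup_Udown hn) fun _ hj =>
    (S.Udown_le_eigenspace_B (Nat.lt_succ_iff.1 hj)).trans
      (eigenspace_le_eigenspace_inv S.hBinvB _)

theorem map_U_one_sub_le_and_isNilpotent {f : Module.End 𝕂 V} {c : ℕ → 𝕂}
    (hf : ActsByScalarsOnGraded S.starFlag (S.d + 1) f c) (hc : ∀ n < S.d + 1, c n = 1) :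
    (∀ i ≤ S.d, (S.U i).map (1 - f) ≤ ⨆ j ∈ Finset.range i, S.U j) ∧
      IsNilpotent ((1 : Module.End 𝕂 V) - f) := by
  have hlower : ∀ n < S.d + 1, (S.starFlag (n + 1)).map (1 - f) ≤ S.starFlag n :=
    fun _ hn => hf.map_one_sub_le hc hn
  refine ⟨fun i hi => ?_, S.d + 1, pow_eq_zero_of_map_succ_le hlower S.starFlag_zero
    S.starFlag_eq_top⟩
  rw [← S.starFlag_eq_biSup_U (by omega)]
  exact (map_mono inf_le_left).trans (hlower i (by omega))

end QRacahOps

section Statements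

variable {𝕂 V : Type*} [Field 𝕂] [IsAlgClosed 𝕂]
  [AddCommGroup V] [Module 𝕂 V] [FiniteDimensional 𝕂 V] [Nontrivial V]

/-- each of `I - BK⁻¹`, `I - KB⁻¹`, `I - K⁻¹B`, `I - B⁻¹K` sends `U_i` into
`U_0 + U_1 + ⋯ + U_{i-1}` for `0 ≤ i ≤ d`, and each is nilpotent. -/
theorem statement9 (S : QRacahOps 𝕂 V) :
    ((∀ i ≤ S.d, (S.U i).map (1 - S.B * S.Kinv) ≤ ⨆ j ∈ Finset.range i, S.U j) ∧
      IsNilpotent ((1 : Module.End 𝕂 V) - S.B * S.Kinv)) ∧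
    ((∀ i ≤ S.d, (S.U i).map (1 - S.K * S.Binv) ≤ ⨆ j ∈ Finset.range i, S.U j) ∧
      IsNilpotent ((1 : Module.End 𝕂 V) - S.K * S.Binv)) ∧
    ((∀ i ≤ S.d, (S.U i).map (1 - S.Kinv * S.B) ≤ ⨆ j ∈ Finset.range i, S.U j) ∧
      IsNilpotent ((1 : Module.End 𝕂 V) - S.Kinv * S.B)) ∧
    ((∀ i ≤ S.d, (S.U i).map (1 - S.Binv * S.K) ≤ ⨆ j ∈ Finset.range i, S.U j) ∧
      IsNilpotent ((1 : Module.End 𝕂 V) - S.Binv * S.K)) := by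
  have hK := S.actsByScalarsOnGraded_K
  have hKinv := S.actsByScalarsOnGraded_Kinv
  have hB := S.actsByScalarsOnGraded_B
  have hBinv := S.actsByScalarsOnGraded_Binv
  have hcancel : ∀ n < S.d + 1, S.qPow n * (S.qPow n)⁻¹ = 1 :=
    fun n _ => mul_inv_cancel₀ (S.qPow_ne_zero n)
  have hcancel' : ∀ n < S.d + 1, (S.qPow n)⁻¹ * S.qPow n = 1 :=
    fun n _ => inv_mul_cancel₀ (S.qPow_ne_zero n)
  exact ⟨S.map_U_one_sub_le_and_isNilpotent (hKinv.mul hB) hcancel,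
    S.map_U_one_sub_le_and_isNilpotent (hBinv.mul hK) hcancel,
    S.map_U_one_sub_le_and_isNilpotent (hB.mul hKinv) hcancel',
    S.map_U_one_sub_le_and_isNilpotent (hK.mul hBinv) hcancel'⟩

end Statements
end
end

section
/- For each integer i with 0 ≤ i ≤ d/2, the kernel of the restriction of ψ to U_i equals K_i = U_i ∩ U_i^⇓; that is, a vector v ∈ U_i satisfies ψv = 0 if and only if v ∈ K_i. -/
noncomputable section

open Module Submodule Polynomial

section Statements

variable {𝕂 V : Type*} [Field 𝕂] [IsAlgClosed 𝕂]
  [AddCommGroup V] [Module 𝕂 V] [FiniteDimensional 𝕂 V] [Nontrivial V]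


/-!
Let `v ∈ U_i` with `ψ v = 0`. On `U_j` the commutator `ψR - Rψ` is the scalar `η_j - η_{j+1}`,
so `ψ R^{k+1} v = (η_i - η_{i+k+1}) R^k v`. Since `R U_j ⊆ U_{j+1}` and `U_{d+1} = 0`, and
`η_i ≠ η_{i+k+1}` for `d - 2i < k ≤ d - i` (this is where `q⁴ ≠ 1` and the shape of the
eigenvalues enter), descending from `k = d - i + 1` gives `R^{d-2i+1} v = 0`. On `U_i` the power
`R^k` acts as `τ_{i,i+k}(A)`, so `(A - θ_i)⋯(A - θ_{d-i})` kills `v ∈ V_i + ⋯ + V_d`, which forces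
`v ∈ V_0 + ⋯ + V_{d-i}`, i.e. `v ∈ U_i^⇓`.
-/

theorem eq_or_mul_eq_one_of_add_inv_eq_add_inv {F : Type*} [Field F] {x y : F} (hx : x ≠ 0)
    (hy : y ≠ 0) (h : x + x⁻¹ = y + y⁻¹) : x = y ∨ x * y = 1 := by
  have : (x - y) * (x * y - 1) = 0 := by
    calc (x - y) * (x * y - 1) = (x + x⁻¹ - (y + y⁻¹)) * (x * y) := by field_simp; ring
      _ = 0 := by rw [h, sub_self, zero_mul]
  rcases mul_eq_zero.1 this with h | h
  · exact .inl (sub_eq_zero.1 h)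
  · exact .inr (sub_eq_zero.1 h)

theorem Submodule.map_biSup_range_le_of_tridiagonal {R M : Type*} [Semiring R] [AddCommMonoid M]
    [Module R M] {f : M →ₗ[R] M} {W : ℕ → Submodule R M} {n : ℕ}
    (hf : ∀ j ≤ n, (W j).map f ≤ W (j - 1) ⊔ W j ⊔ W (j + 1)) :
    (⨆ j ∈ Finset.range (n + 1), W j).map f ≤ ⨆ j ∈ Finset.range (n + 2), W j := by
  have hle : ∀ j, j ≤ n + 1 → W j ≤ ⨆ j ∈ Finset.range (n + 2), W j := fun j hj =>
    le_iSup₂ (f := fun j (_ : j ∈ Finset.range (n + 2)) => W j) j (Finset.mem_range.2 (by omega))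
  refine map_le_iff_le_comap.2 (iSup₂_le fun j hj => map_le_iff_le_comap.1 ?_)
  have hj : j ≤ n := Nat.lt_succ_iff.1 (Finset.mem_range.1 hj)
  exact (hf j hj).trans (sup_le (sup_le (hle _ (by omega)) (hle _ (by omega))) (hle _ (by omega)))

theorem Module.End.mem_iSup_eigenspace_isRoot_of_aeval_apply_eq_zero {F W : Type*} [Field F]
    [AddCommGroup W] [Module F W] {f : Module.End F W} {p : F[X]} {s : Finset F} {v : W}
    (hv : v ∈ ⨆ μ ∈ s, f.eigenspace μ) (hp : aeval f p v = 0) :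
    v ∈ ⨆ μ ∈ s, ⨆ (_ : p.IsRoot μ), f.eigenspace μ := by
  obtain ⟨w, rfl⟩ := (Submodule.mem_iSup_finset_iff_exists_sum _ v).1 hv
  have hw : ∀ μ ∈ s, p.eval μ • (w μ : W) = 0 := by
    refine (iSupIndep_iff_finsetSum_eq_zero_imp_eq_zero _).1 f.eigenspaces_iSupIndep s _
      (fun μ _ => Submodule.smul_mem _ _ (w μ).2) ?_
    simpa only [map_sum, Module.End.aeval_apply_of_mem_apply_eq_smul
      (Module.End.mem_eigenspace_iff.1 (w _).2)] using hp
  refine Submodule.sum_mem _ fun μ hμ => ?_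
  by_cases hroot : p.IsRoot μ
  · exact le_iSup₂_of_le (f := fun μ (_ : μ ∈ s) => ⨆ (_ : p.IsRoot μ), f.eigenspace μ) μ hμ
      (le_iSup_of_le hroot le_rfl) (w μ).2
  · rw [(smul_eq_zero.1 (hw μ hμ)).resolve_left hroot]
    exact Submodule.zero_mem _

namespace QRacahOps

variable (S : QRacahOps 𝕂 V)

abbrev theta (j : ℕ) : 𝕂 := qRacahTheta S.d S.q S.a j

/-- `ψR - Rψ` acts on `U_j` as the scalar `η_j - η_{j+1}`, which telescopes along powers of `R`. -/
def eta (j : ℕ) : 𝕂 := S.q ^ ((S.d : ℤ) - 2 * j + 1) + (S.q ^ ((S.d : ℤ) - 2 * j + 1))⁻¹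

lemma U_eq_bot {i : ℕ} (hi : S.d < i) : S.U i = ⊥ := by
  simp [QRacahTDPair.U, Finset.Icc_eq_empty_of_lt hi]

lemma eq_zero_of_mem_U {i : ℕ} (hi : S.d < i) {v : V} (hv : v ∈ S.U i) : v = 0 := by
  rwa [S.U_eq_bot hi, Submodule.mem_bot] at hv

lemma K_apply {i : ℕ} (hi : i ≤ S.d) {v : V} (hv : v ∈ S.U i) :
    S.K v = S.q ^ ((S.d : ℤ) - 2 * i) • v :=
  S.hK i hi v hv

lemma Kinv_apply {i : ℕ} (hi : i ≤ S.d) {v : V} (hv : v ∈ S.U i) :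
    S.Kinv v = (S.q ^ ((S.d : ℤ) - 2 * i))⁻¹ • v := by
  have hq : S.q ^ ((S.d : ℤ) - 2 * i) ≠ 0 := zpow_ne_zero _ S.hq
  calc S.Kinv v = (S.q ^ ((S.d : ℤ) - 2 * i))⁻¹ • (S.Kinv * S.K) v := by
        rw [Module.End.mul_apply, S.K_apply hi hv, map_smul, smul_smul, inv_mul_cancel₀ hq,
          one_smul]
    _ = _ := by rw [S.hKinvK, Module.End.one_apply]

lemma R_apply {i : ℕ} (hi : i ≤ S.d) {v : V} (hv : v ∈ S.U i) :
    S.R v = S.A v - S.theta i • v := by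
  have hθ : S.theta i
      = S.a * S.q ^ ((S.d : ℤ) - 2 * i) + S.a⁻¹ * (S.q ^ ((S.d : ℤ) - 2 * i))⁻¹ := by
    rw [theta, qRacahTheta, ← zpow_neg, neg_sub]
  simp only [R, LinearMap.sub_apply, LinearMap.smul_apply, S.K_apply hi hv, S.Kinv_apply hi hv,
    hθ, smul_smul, add_smul]
  abel

lemma A_sub_smul_mem_iSup_Veig {i : ℕ} {v : V} (hv : v ∈ ⨆ j ∈ Finset.Icc i S.d, S.Veig j) :
    S.A v - S.theta i • v ∈ ⨆ j ∈ Finset.Icc (i + 1) S.d, S.Veig j := by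
  suffices key : (⨆ j ∈ Finset.Icc i S.d, S.Veig j) ≤
      Submodule.comap (S.A - S.theta i • 1) (⨆ j ∈ Finset.Icc (i + 1) S.d, S.Veig j) by
    simpa using key hv
  refine iSup₂_le fun j hj u hu => ?_
  obtain ⟨hij, hjd⟩ := Finset.mem_Icc.1 hj
  have hAu : S.A u = S.theta j • u := by
    rw [S.hVeig j hjd] at hu
    exact Module.End.mem_eigenspace_iff.1 hu
  rw [Submodule.mem_comap, LinearMap.sub_apply, LinearMap.smul_apply, Module.End.one_apply, hAu,
    ← sub_smul]
  rcases hij.eq_or_lt with rfl | hlt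
  · rw [sub_self, zero_smul]
    exact Submodule.zero_mem _
  · exact Submodule.smul_mem _ _ (le_iSup₂ (f := fun j (_ : j ∈ Finset.Icc (i + 1) S.d) =>
      S.Veig j) j (Finset.mem_Icc.2 ⟨hlt, hjd⟩) hu)

lemma R_mem_U {i : ℕ} {v : V} (hv : v ∈ S.U i) : S.R v ∈ S.U (i + 1) := by
  rcases le_or_gt i S.d with hi | hi
  · rw [S.R_apply hi hv]
    refine ⟨Submodule.sub_mem _ ?_ (Submodule.smul_mem _ _ ?_), S.A_sub_smul_mem_iSup_Veig hv.2⟩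
    · exact Submodule.map_biSup_range_le_of_tridiagonal
        (fun j hj => S.hTriStar j (hj.trans hi)) ⟨v, hv.1, rfl⟩
    · exact SetLike.le_def.1
        (biSup_mono fun j hj => Finset.mem_range.2 (Nat.lt_succ_of_lt (Finset.mem_range.1 hj))) hv.1
  · rw [S.eq_zero_of_mem_U hi hv, map_zero]
    exact Submodule.zero_mem _

lemma R_pow_mem_U {i : ℕ} {v : V} (hv : v ∈ S.U i) (k : ℕ) : (S.R ^ k) v ∈ S.U (i + k) := by
  induction k with
  | zero => simpa using hv
  | succ k ih => rw [pow_succ', Module.End.mul_apply, ← add_assoc]; exact S.R_mem_U ih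

lemma R_pow_apply_eq_tauA {i : ℕ} {v : V} (hv : v ∈ S.U i) {k : ℕ} (hk : i + k ≤ S.d + 1) :
    (S.R ^ k) v = S.tauA i (i + k) v := by
  induction k with
  | zero => simp [QRacahTDPair.tauA, qRacahTau]
  | succ k ih =>
    simp only [QRacahTDPair.tauA] at ih ⊢
    have htau : qRacahTau S.d S.q S.a i (i + (k + 1))
        = (X - C (S.theta (i + k))) * qRacahTau S.d S.q S.a i (i + k) := by
      rw [qRacahTau, ← add_assoc, Finset.prod_Ico_succ_top (Nat.le_add_right i k), mul_comm]
      rfl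
    rw [pow_succ', Module.End.mul_apply, S.R_apply (by omega) (S.R_pow_mem_U hv k), ih (by omega),
      htau, map_mul, Module.End.mul_apply]
    simp [Module.algebraMap_end_apply]

lemma psi_R_apply {i : ℕ} (hi : i ≤ S.d) {v : V} (hv : v ∈ S.U i) :
    S.ψ (S.R v) = S.R (S.ψ v) + (S.eta i - S.eta (i + 1)) • v := by
  have hη : (S.q - S.q⁻¹) * (S.q ^ ((S.d : ℤ) - 2 * i) - (S.q ^ ((S.d : ℤ) - 2 * i))⁻¹)
      = S.eta i - S.eta (i + 1) := by
    rw [eta, eta, Nat.cast_add_one, show (S.d : ℤ) - 2 * (i + 1) + 1 = S.d - 2 * i - 1 by ring,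
      zpow_add_one₀ S.hq, zpow_sub_one₀ S.hq, mul_inv, mul_inv, inv_inv]
    ring
  have h : S.ψ (S.R v) - S.R (S.ψ v) = ((S.q - S.q⁻¹) • (S.K - S.Kinv)) v :=
    LinearMap.congr_fun S.hψR v
  rw [LinearMap.smul_apply, LinearMap.sub_apply, S.K_apply hi hv, S.Kinv_apply hi hv, ← sub_smul,
    smul_smul, hη] at h
  rw [← h, add_sub_cancel]

lemma psi_R_pow_succ_apply {i : ℕ} {v : V} (hv : v ∈ S.U i) (hψv : S.ψ v = 0) (k : ℕ) :
    S.ψ ((S.R ^ (k + 1)) v) = (S.eta i - S.eta (i + k + 1)) • (S.R ^ k) v := by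
  induction k with
  | zero =>
    rcases le_or_gt i S.d with hi | hi
    · simpa [hψv] using S.psi_R_apply hi hv
    · simp [S.eq_zero_of_mem_U hi hv]
  | succ k ih =>
    have hw := S.R_pow_mem_U hv (k + 1)
    rw [pow_succ' S.R (k + 1), Module.End.mul_apply]
    rcases le_or_gt (i + (k + 1)) S.d with hle | hlt
    · rw [S.psi_R_apply hle hw, ih, map_smul, pow_succ' S.R k, Module.End.mul_apply, ← add_smul,
        ← add_assoc]
      congr 1
      ring
    · simp [S.eq_zero_of_mem_U hlt hw]

lemma q_sq_ne_one : S.q ^ 2 ≠ 1 := fun h =>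
  S.hq4 (by rw [show 4 = 2 * 2 from rfl, pow_mul, h, one_pow])

lemma U_zero_inf_U_one : S.U 0 ⊓ S.U 1 = ⊥ := by
  refine (Submodule.eq_bot_iff _).2 fun v ⟨h0, h1⟩ => ?_
  by_contra hv
  have hK : S.q ^ ((S.d : ℤ) - 2 * (0 : ℕ)) = S.q ^ ((S.d : ℤ) - 2 * (1 : ℕ)) :=
    smul_left_injective 𝕂 hv (by
      simp only [← S.K_apply (Nat.zero_le _) h0, ← S.K_apply S.hd h1])
  have hq2 : S.q ^ ((S.d : ℤ) - 2) * S.q ^ (2 : ℤ) = S.q ^ ((S.d : ℤ) - 2) * 1 := by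
    rw [← zpow_add₀ S.hq, mul_one, sub_add_cancel]
    simpa using hK
  exact S.q_sq_ne_one (by exact_mod_cast mul_left_cancel₀ (zpow_ne_zero _ S.hq) hq2)

lemma Vstar_zero_le_U {i : ℕ} (h : ⨆ j ∈ Finset.Icc i S.d, S.Veig j = ⊤) : S.Vstar 0 ≤ S.U i :=
  le_inf (le_iSup₂ (f := fun j (_ : j ∈ Finset.range (i + 1)) => S.Vstar j) 0 (by simp))
    (h ▸ le_top)

lemma iSup_Veig_Icc_zero : ⨆ j ∈ Finset.Icc 0 S.d, S.Veig j = ⊤ := by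
  rw [← Finset.Ico_add_one_right_eq_Icc, ← Finset.range_eq_Ico, S.hdiag]

/-- `θ_m = θ_0` would give `V = V_1 + ⋯ + V_d`, hence `V*_0 ⊆ U_0 ∩ U_1`. -/
lemma q_pow_ne_one {m : ℕ} (h1 : 1 ≤ m) (h2 : m ≤ S.d) : S.q ^ (2 * m) ≠ 1 := by
  intro hm
  have hm' : S.q ^ (2 * (m : ℤ)) = 1 := by exact_mod_cast hm
  have hθ : S.theta m = S.theta 0 := by
    simp [theta, qRacahTheta, zpow_sub₀ S.hq, hm']
  have hV0 : S.Veig 0 = S.Veig m := by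
    rw [S.hVeig 0 (Nat.zero_le _), S.hVeig m h2, ← theta, ← theta, hθ]
  have htop : ⨆ j ∈ Finset.Icc 1 S.d, S.Veig j = ⊤ := by
    rw [eq_top_iff, ← S.iSup_Veig_Icc_zero]
    refine iSup₂_le fun j hj => ?_
    rcases Nat.eq_zero_or_pos j with rfl | hj0
    · rw [hV0]
      exact le_iSup₂ (f := fun j (_ : j ∈ Finset.Icc 1 S.d) => S.Veig j) m (by simp [h1, h2])
    · exact le_iSup₂ (f := fun j (_ : j ∈ Finset.Icc 1 S.d) => S.Veig j) j
        (Finset.mem_Icc.2 ⟨hj0, (Finset.mem_Icc.1 hj).2⟩)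
  exact S.hVstar_ne 0 (Nat.zero_le _) (eq_bot_iff.2 ((le_inf (S.Vstar_zero_le_U
    S.iSup_Veig_Icc_zero) (S.Vstar_zero_le_U htop)).trans S.U_zero_inf_U_one.le))

lemma q_zpow_ne_one {m : ℤ} (h0 : m ≠ 0) (hlo : -S.d ≤ m) (hhi : m ≤ S.d) :
    S.q ^ (2 * m) ≠ 1 := by
  obtain ⟨n, rfl | rfl⟩ := Int.eq_nat_or_neg m
  · exact_mod_cast S.q_pow_ne_one (m := n) (by omega) (by omega)
  · rw [mul_neg, zpow_neg, inv_ne_one]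
    exact_mod_cast S.q_pow_ne_one (m := n) (by omega) (by omega)

lemma eta_ne_eta {i k : ℕ} (hi : 2 * i ≤ S.d) (hk1 : S.d + 2 ≤ 2 * i + k) (hk2 : i + k ≤ S.d + 1) :
    S.eta i ≠ S.eta (i + k) := by
  intro h
  have hq : ∀ n : ℤ, S.q ^ n ≠ 0 := fun n => zpow_ne_zero n S.hq
  rcases eq_or_mul_eq_one_of_add_inv_eq_add_inv (hq _) (hq _) h with h | h
  · refine S.q_zpow_ne_one (m := k) (by omega) (by omega) (by omega) ?_
    rw [show 2 * (k : ℤ) = ((S.d : ℤ) - 2 * i + 1) - ((S.d : ℤ) - 2 * (i + k : ℕ) + 1) by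
      push_cast; ring, zpow_sub₀ S.hq, h, div_self (hq _)]
  · refine S.q_zpow_ne_one (m := S.d + 1 - 2 * i - k) (by omega) (by omega) (by omega) ?_
    rw [← h, ← zpow_add₀ S.hq]
    congr 1
    push_cast
    ring

lemma R_pow_apply_eq_zero {i : ℕ} (hi : 2 * i ≤ S.d) {v : V} (hv : v ∈ S.U i)
    (hψv : S.ψ v = 0) : (S.R ^ (S.d - 2 * i + 1)) v = 0 := by
  refine Nat.decreasingInduction' (fun n hn hmn hzero => ?_)
    (show S.d - 2 * i + 1 ≤ S.d - i + 1 by omega)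
    (S.eq_zero_of_mem_U (by omega) (S.R_pow_mem_U hv _))
  have h := S.psi_R_pow_succ_apply hv hψv n
  rw [hzero, map_zero, eq_comm, smul_eq_zero, add_assoc] at h
  exact h.resolve_left (sub_ne_zero.2 (S.eta_ne_eta hi (by omega) (by omega)))

lemma mem_iSup_Veig_of_tauA_apply_eq_zero {i n : ℕ} (hn : n ≤ S.d + 1) {v : V}
    (hv : v ∈ ⨆ j ∈ Finset.Icc i S.d, S.Veig j) (hτ : S.tauA i n v = 0) :
    v ∈ ⨆ j ∈ Finset.range n, S.Veig j := by
  classical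
  have hv' : v ∈ ⨆ μ ∈ (Finset.Icc i S.d).image S.theta, S.A.eigenspace μ := by
    rwa [Finset.iSup_finset_image, ← biSup_congr fun j hj => S.hVeig j (Finset.mem_Icc.1 hj).2]
  refine (iSup₂_le fun μ _ => iSup_le fun hμ => ?_ : _ ≤ ⨆ j ∈ Finset.range n, S.Veig j)
    (Module.End.mem_iSup_eigenspace_isRoot_of_aeval_apply_eq_zero hv' hτ)
  obtain ⟨k, hk, hμk⟩ := Finset.prod_eq_zero_iff.1 (by simpa [qRacahTau, eval_prod] using hμ)
  rw [Finset.mem_Ico] at hk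
  rw [sub_eq_zero.1 hμk, ← S.hVeig k (by omega)]
  exact le_iSup₂ (f := fun j (_ : j ∈ Finset.range n) => S.Veig j) k (Finset.mem_range.2 hk.2)

end QRacahOps

/-- for `0 ≤ i ≤ d/2`, the kernel of `ψ` restricted to `U_i` is
`K_i = U_i ∩ U_i^⇓`. -/
theorem statement19 (S : QRacahOps 𝕂 V) (i : ℕ) (hi : 2 * i ≤ S.d) :
    ∀ v ∈ S.U i, (S.ψ v = 0 ↔ v ∈ S.Ksub i) := by
  intro v hv
  refine ⟨fun hψv => ⟨hv, hv.1, ?_⟩, fun hK => S.hψKer i hi hK⟩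
  have hτ : S.tauA i (S.d - i + 1) v = 0 := by
    rw [← S.R_pow_apply_eq_zero hi hv hψv, S.R_pow_apply_eq_tauA hv (by omega)]
    congr 2
    omega
  exact S.mem_iSup_Veig_of_tauA_apply_eq_zero (by omega) hv.2 hτ

end Statements
end
end
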